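/- Let G be the finite simple graph on the seven vertices {A, B, C, D, E, F, G'} whose edges are exactly {A,C}, {C,D}, {D,B}, {A,E}, {E,F}, {F,B}, {G',C}, {G',D}, {G',E}, {G',F}. Then A and B are not weakly 2-hyper-connected in G: the single vertex G' witnesses this, i.e., for S = {G'} every path from A to B in G contains an edge {X,Y} with G' ∈ N[X] and G' ∈ N[Y]. -/

import Mathlib

open SimpleGraph

/-- The closed neighborhood `N[x]` is disjoint from `S`. -/
def ClosedNbhdDisj {V : Type*} (G : SimpleGraph V) (S : Finset V) (x : V) : Prop :=
  ∀ u ∈ S, ¬ (x = u ∨ G.Adj x u)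

/-- `A` and `B` are weakly `k`-hyper-connected: for every `S ⊆ V \ {A,B}` with
`|S| < k` there is a path from `A` to `B` avoiding `S` such that for every
edge `{x, y}` of the path, `N[x] ∩ S = ∅` or `N[y] ∩ S = ∅`. -/
def WeaklyHyperConnected {V : Type*} (G : SimpleGraph V) (A B : V) (k : ℕ) : Prop :=
  ∀ S : Finset V, A ∉ S → B ∉ S → S.card < k →
    ∃ p : G.Walk A B, p.IsPath ∧ (∀ v ∈ p.support, v ∉ S) ∧
      p.support.Chain' (fun x y => ClosedNbhdDisj G S x ∨ ClosedNbhdDisj G S y)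

/-- The graph of Example 4: vertices `A = 0`, `B = 1`, `C = 2`, `D = 3`,
`E = 4`, `F = 5`, `G' = 6` and edges
`{A,C}, {C,D}, {D,B}, {A,E}, {E,F}, {F,B}, {G',C}, {G',D}, {G',E}, {G',F}`. -/
def exGraph7 : SimpleGraph (Fin 7) :=
  SimpleGraph.fromRel (fun x y =>
    (x, y) ∈ [((0 : Fin 7), (2 : Fin 7)), (2, 3), (3, 1),
              (0, 4), (4, 5), (5, 1), (6, 2), (6, 3), (6, 4), (6, 5)])

/- Every vertex other than `A = 0` and `B = 1` is `G' = 6` or a neighbour of it. As `A` and `B` are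
distinct, non-adjacent and have no common neighbour, an `A`–`B` path has length at least 3, so its
second edge joins two inner vertices, and `G'` lies in the closed neighbourhood of both. -/

instance : DecidableRel exGraph7.Adj := fun a b =>
  decidable_of_iff _ (SimpleGraph.fromRel_adj _ a b).symm

theorem closedNbhdDisj_singleton_iff {V : Type*} {G : SimpleGraph V} {s x : V} :
    ClosedNbhdDisj G {s} x ↔ x ≠ s ∧ ¬ G.Adj x s := by
  simp [ClosedNbhdDisj]

namespace SimpleGraph.Walk

variable {V : Type*} {G : SimpleGraph V} {u v : V}

theorem three_le_length_of_no_common_neighbor (huv : u ≠ v) (hadj : ¬ G.Adj u v)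
    (hcommon : ∀ w, G.Adj u w → ¬ G.Adj w v) : ∀ p : G.Walk u v, 3 ≤ p.length
  | nil => absurd rfl huv
  | cons h nil => absurd h hadj
  | cons h (cons h' nil) => absurd h' (hcommon _ h)
  | cons _ (cons _ (cons _ _)) => by simp

theorem rel_getVert_succ_of_isChain_support {R : V → V → Prop} {p : G.Walk u v}
    (hR : p.support.IsChain R) {i : ℕ} (hi : i < p.length) :
    R (p.getVert i) (p.getVert (i + 1)) := by
  have := hR.getElem i (by simpa using hi)
  simpa [support_getElem_eq_getVert] using this

theorem IsPath.getVert_ne_start_and_ne_end {p : G.Walk u v} (hp : p.IsPath) {i : ℕ}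
    (h0 : 0 < i) (hi : i < p.length) : p.getVert i ≠ u ∧ p.getVert i ≠ v :=
  ⟨fun h => h0.ne' ((hp.getVert_eq_start_iff hi.le).1 h),
    fun h => hi.ne ((hp.getVert_eq_end_iff hi.le).1 h)⟩

theorem IsPath.not_isChain_support_of_three_le_length {R : V → V → Prop} {p : G.Walk u v}
    (hp : p.IsPath) (hlen : 3 ≤ p.length)
    (hR : ∀ x y, x ≠ u → x ≠ v → y ≠ u → y ≠ v → ¬ R x y) : ¬ p.support.IsChain R := by
  intro hchain
  obtain ⟨hx₁, hx₂⟩ := hp.getVert_ne_start_and_ne_end (i := 1) (by omega) (by omega)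
  obtain ⟨hy₁, hy₂⟩ := hp.getVert_ne_start_and_ne_end (i := 2) (by omega) (by omega)
  exact hR _ _ hx₁ hx₂ hy₁ hy₂ (rel_getVert_succ_of_isChain_support hchain (by omega))

end SimpleGraph.Walk

theorem exGraph7_not_closedNbhdDisj {x : Fin 7} (h0 : x ≠ 0) (h1 : x ≠ 1) :
    ¬ ClosedNbhdDisj exGraph7 {6} x := by
  rw [closedNbhdDisj_singleton_iff, not_and_or, not_not, not_not]
  revert x
  decide

theorem exGraph7_not_isChain_support (p : exGraph7.Walk 0 1) (hp : p.IsPath) :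
    ¬ p.support.IsChain (fun x y =>
        ClosedNbhdDisj exGraph7 {6} x ∨ ClosedNbhdDisj exGraph7 {6} y) :=
  hp.not_isChain_support_of_three_le_length
    (Walk.three_le_length_of_no_common_neighbor (by decide) (by decide) (by decide) p)
    fun _ _ hx₀ hx₁ hy₀ hy₁ h => h.elim (exGraph7_not_closedNbhdDisj hx₀ hx₁)
      (exGraph7_not_closedNbhdDisj hy₀ hy₁)

/-- In the graph of Example 4 (with `A = 0`, `B = 1`, `G' = 6`), `A` and `B`
are not weakly 2-hyper-connected, and the single vertex `G'` witnesses this: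
for `S = {G'}`, every path from `A` to `B` contains an edge `{x,y}` with
`G' ∈ N[x]` and `G' ∈ N[y]`. -/
theorem exGraph7_not_weaklyHyperConnected :
    ¬ WeaklyHyperConnected exGraph7 0 1 2 ∧
      ∀ p : exGraph7.Walk 0 1, p.IsPath →
        ¬ p.support.Chain' (fun x y =>
            ClosedNbhdDisj exGraph7 {6} x ∨ ClosedNbhdDisj exGraph7 {6} y) := by
  refine ⟨fun hW => ?_, exGraph7_not_isChain_support⟩
  obtain ⟨p, hp, -, hchain⟩ := hW {6} (by decide) (by decide) (by decide)
  exact exGraph7_not_isChain_support p hp hchain
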